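/- arXiv:2502.11821 — 6 statements merged into one kernel-verified Lean document; each statement's English description precedes it below -/
import Mathlib

section
/- If the subalgebra system (ℂ ⊆ 𝒜, E), where 𝒜 = M_{n₀} ⊕ ⋯ ⊕ M_{n_{s-1}}, admits a unitary orthonormal basis, then E(X) = φ(X)·I where φ is the tracial state with trace vector given by the dimension vector, i.e. φ(⊕ᵢ Xᵢ) = (Σᵢ nᵢ tr(Xᵢ)) / (Σᵢ nᵢ²). -/
/-!
Expanding the identity of `𝒜` in the unitary basis, `X = ∑ₜ ψ(Wₜ* X) Wₜ`, writes every
linear endomorphism `L` of `𝒜` as `∑ₜ ψ(Wₜ* ·) ⊗ L Wₜ`, so its trace is `∑ₜ ψ(Wₜ* L Wₜ)`.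
For right multiplication by `Y` this gives `Tr(X ↦ XY) = d ψ(Y)`, because `Wₜ* Wₜ = 1`.
Computed with matrix units instead, the same trace is `∑ᵢ nᵢ tr Yᵢ`; taking `Y = 1` gives
`d = ∑ᵢ nᵢ²`.
-/

open Matrix
open scoped ComplexOrder

namespace LinearMap

variable {R M : Type*} [CommRing R] [AddCommGroup M] [Module R M]
  [Module.Free R M] [Module.Finite R M]

theorem trace_eq_sum_of_sum_smul_eq {ι : Type*} [Fintype ι] (f : ι → M →ₗ[R] R) (v : ι → M)
    (hfv : ∀ x, ∑ i, f i x • v i = x) (L : M →ₗ[R] M) :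
    trace R M L = ∑ i, f i (L (v i)) := by
  have hL : L = ∑ i, (f i).smulRight (L (v i)) := by
    ext x
    conv_lhs => rw [← hfv x]
    simp
  calc trace R M L = trace R M (∑ i, (f i).smulRight (L (v i))) := congrArg _ hL
    _ = ∑ i, f i (L (v i)) := by simp

theorem trace_mulRight_eq_card_mul {A : Type*} [Ring A] [Algebra R A] [Module.Free R A]
    [Module.Finite R A] {ι : Type*} [Fintype ι] (ψ : A →ₗ[R] R) (V W : ι → A)
    (hVW : ∀ t, V t * W t = 1) (hexp : ∀ X, ∑ t, ψ (V t * X) • W t = X) (Y : A) :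
    trace R A (mulRight R Y) = Fintype.card ι * ψ Y := by
  rw [trace_eq_sum_of_sum_smul_eq (fun t => ψ ∘ₗ mulLeft R (V t)) W hexp]
  simp [← mul_assoc, hVW]

end LinearMap

theorem Matrix.trace_mulRight_pi {R ι : Type*} [CommRing R] [Fintype ι] [DecidableEq ι]
    {m : ι → Type*} [∀ i, Fintype (m i)] [∀ i, DecidableEq (m i)]
    (Y : ∀ i, Matrix (m i) (m i) R) :
    LinearMap.trace R (∀ i, Matrix (m i) (m i) R) (LinearMap.mulRight R Y) =
      ∑ i, (Fintype.card (m i) : R) * (Y i).trace := by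
  have hunits : ∀ X : ∀ i, Matrix (m i) (m i) R,
      ∑ x : Σ i, m i × m i, X x.1 x.2.1 x.2.2 • Pi.single x.1 (single x.2.1 x.2.2 (1 : R)) =
        X := by
    intro X
    rw [Fintype.sum_sigma]
    conv_rhs => rw [← Finset.univ_sum_single X]
    refine Finset.sum_congr rfl fun i _ => ?_
    conv_rhs => rw [matrix_eq_sum_single (X i), ← Fintype.sum_prod_type']
    simp_rw [← Pi.single_smul, smul_single, smul_eq_mul, mul_one]
    exact (map_sum (LinearMap.single R (fun i => Matrix (m i) (m i) R) i) _ _).symm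
  rw [LinearMap.trace_eq_sum_of_sum_smul_eq
    (fun x : Σ i, m i × m i => entryLinearMap R R x.2.1 x.2.2 ∘ₗ LinearMap.proj x.1) _ hunits]
  simp [Fintype.sum_sigma, Fintype.sum_prod_type, Matrix.trace, single_mul_apply_same]

theorem state_of_unitary_onb_general
    (s : ℕ) (n : Fin s → ℕ)
    (ψ : (∀ i, Matrix (Fin (n i)) (Fin (n i)) ℂ) →ₗ[ℂ] ℂ)
    (hunital : ψ 1 = 1)
    (d : ℕ) (W : Fin d → ∀ i, Matrix (Fin (n i)) (Fin (n i)) ℂ)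
    (hWu : ∀ t, W t ∈ unitary (∀ i, Matrix (Fin (n i)) (Fin (n i)) ℂ))
    (hbasis : ∀ X, X = ∑ t, ψ (star (W t) * X) • W t) :
    ∀ X, ψ X = (∑ i, (n i : ℂ) * Matrix.trace (X i)) / (∑ i, (n i : ℂ) ^ 2) := by
  have htrace (Y) : ∑ i, (n i : ℂ) * Matrix.trace (Y i) = d * ψ Y := by
    simpa [Matrix.trace_mulRight_pi] using LinearMap.trace_mulRight_eq_card_mul ψ
      (fun t => star (W t)) W (fun t => Unitary.star_mul_self_of_mem (hWu t))
      (fun X => (hbasis X).symm) Y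
  have hd : ∑ i, (n i : ℂ) ^ 2 = d := by
    simpa [hunital, sq] using htrace 1
  have hd0 : (d : ℂ) ≠ 0 := by
    rintro hd0
    obtain rfl : d = 0 := by exact_mod_cast hd0
    have h10 : (1 : ∀ i, Matrix (Fin (n i)) (Fin (n i)) ℂ) = 0 := by simpa using hbasis 1
    simp [h10] at hunital
  intro X
  rw [hd, eq_div_iff hd0, mul_comm, htrace]

/-- If (ℂ ⊆ 𝒜, E) with 𝒜 = M_{n₀} ⊕ ⋯ ⊕ M_{n_{s-1}} and E(X) = ψ(X)·I for a
state ψ admits a unitary orthonormal basis, then ψ is the tracial state with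
trace vector the dimension vector: ψ(⊕ᵢ Xᵢ) = (∑ᵢ nᵢ tr Xᵢ)/(∑ᵢ nᵢ²). -/
theorem state_of_unitary_onb
    (s : ℕ) (hs : 0 < s) (n : Fin s → ℕ) (hn : ∀ i, 0 < n i)
    (ψ : (∀ i, Matrix (Fin (n i)) (Fin (n i)) ℂ) →ₗ[ℂ] ℂ)
    (hunital : ψ 1 = 1)
    (hpos : ∀ X, 0 ≤ ψ (star X * X))
    (d : ℕ) (W : Fin d → ∀ i, Matrix (Fin (n i)) (Fin (n i)) ℂ)
    (hWu : ∀ t, W t ∈ unitary (∀ i, Matrix (Fin (n i)) (Fin (n i)) ℂ))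
    (horth : ∀ t t', ψ (star (W t) * W t') = if t = t' then 1 else 0)
    (hbasis : ∀ X, X = ∑ t, ψ (star (W t) * X) • W t) :
    ∀ X, ψ X = (∑ i, (n i : ℂ) * Matrix.trace (X i)) / (∑ i, (n i : ℂ) ^ 2) :=
  state_of_unitary_onb_general s n ψ hunital d W hWu hbasis
end

section
/- If φ is a faithful state on M_n(ℂ) such that the Hilbert space M_n(ℂ) with inner product ⟨X,Y⟩ = φ(X*Y) admits an orthonormal basis consisting of unitary matrices, then φ is the normalized trace φ(X) = tr(X)/n. -/
/-!
Write `φ = trace (ρ * ·)`. Biorthogonality of the `n²` unitaries makes them a basis of `M_n(ℂ)`,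
with the completeness relation `X = ∑ⱼ φ (Uⱼ* X) Uⱼ`. Contracting this relation (apply it to the
matrix units `E_{ad}`, take the `(a, e)` entry and sum over `a`) gives
`n δ_{de} = ∑ⱼ (ρ Uⱼ* Uⱼ)_{de} = n² ρ_{de}`, so `ρ = 1 / n`.
-/

open Matrix
open scoped ComplexOrder

theorem linearIndependent_of_biorthogonal {R M ι : Type*} [Ring R] [AddCommGroup M]
    [Module R M] [Fintype ι] [DecidableEq ι] (v : ι → M) (f : ι → Module.Dual R M)
    (hfv : ∀ j k, f j (v k) = if j = k then 1 else 0) :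
    LinearIndependent R v := by
  rw [Fintype.linearIndependent_iff]
  intro c hc k
  simpa [hfv] using congrArg (f k) hc

theorem sum_apply_smul_eq_self_of_biorthogonal {K V ι : Type*} [Field K] [AddCommGroup V]
    [Module K V] [FiniteDimensional K V] [Fintype ι] [DecidableEq ι] (v : ι → V)
    (f : ι → Module.Dual K V) (hfv : ∀ j k, f j (v k) = if j = k then 1 else 0)
    (hcard : Fintype.card ι = Module.finrank K V) (x : V) :
    ∑ j, f j x • v j = x := by
  let b := basisOfLinearIndependentOfCardEqFinrank' v
    (linearIndependent_of_biorthogonal v f hfv) hcard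
  have hb : ⇑b = v := coe_basisOfLinearIndependentOfCardEqFinrank' ..
  have hcoord : ∀ k, f k x = b.repr x k := fun k => by
    conv_lhs => rw [← b.sum_repr x]
    simp [hb, hfv]
  simpa only [hcoord, hb] using b.sum_repr x

theorem Matrix.exists_eq_trace_mul {m R : Type*} [Fintype m] [DecidableEq m] [CommSemiring R]
    (φ : Matrix m m R →ₗ[R] R) : ∃ ρ : Matrix m m R, ∀ X, φ X = trace (ρ * X) := by
  refine ⟨of fun i k => φ (single k i 1), fun X => ?_⟩
  have : φ = traceLinearMap m R R ∘ₗ LinearMap.mulLeft R (of fun i k => φ (single k i 1)) :=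
    ext_linearMap R fun i j => by ext; simp [trace_mul_single]
  exact LinearMap.congr_fun this X

theorem Matrix.card_smul_eq_of_sum_trace_mul_smul_eq {m ι R : Type*} [Fintype m] [DecidableEq m]
    [Fintype ι] [CommSemiring R] (ρ : Matrix m m R) (U W : ι → Matrix m m R)
    (hWU : ∀ j, W j * U j = 1) (hexp : ∀ X, ∑ j, trace (ρ * W j * X) • U j = X) :
    (Fintype.card ι : R) • ρ = (Fintype.card m : R) • 1 := by
  ext d e
  rw [smul_apply, smul_apply, smul_eq_mul, smul_eq_mul]
  calc (Fintype.card ι : R) * ρ d e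
      = ∑ j, (ρ * W j * U j) d e := by simp [Matrix.mul_assoc, hWU]
    _ = ∑ a, ∑ j, (ρ * W j) d a * U j a e := by
        rw [Finset.sum_comm]
        exact Finset.sum_congr rfl fun j _ => mul_apply
    _ = ∑ a : m, (∑ j, trace (ρ * W j * single a d 1) • U j) a e := by
        simp [trace_mul_single, sum_apply]
    _ = ∑ a : m, (single a d (1 : R)) a e := by simp only [hexp]
    _ = (Fintype.card m : R) * (1 : Matrix m m R) d e := by
        simp [single_apply, one_apply]

theorem faithful_state_with_unitary_onb_is_trace_general
    (n : ℕ) (hn : 0 < n)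
    (φ : Matrix (Fin n) (Fin n) ℂ →ₗ[ℂ] ℂ)
    (U : Fin (n ^ 2) → Matrix (Fin n) (Fin n) ℂ)
    (hUu : ∀ j, U j ∈ Matrix.unitaryGroup (Fin n) ℂ)
    (horth : ∀ j k, φ (star (U j) * U k) = if j = k then 1 else 0) :
    ∀ X, φ X = Matrix.trace X / n := by
  obtain ⟨ρ, hρ⟩ := exists_eq_trace_mul φ
  have hexp : ∀ X, ∑ j, trace (ρ * star (U j) * X) • U j = X := fun X => by
    simpa [hρ, Matrix.mul_assoc] using sum_apply_smul_eq_self_of_biorthogonal U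
      (fun j => φ ∘ₗ LinearMap.mulLeft ℂ (star (U j))) horth
      (by simp [Module.finrank_matrix, sq]) X
  have hρ_scalar : ((n : ℂ) ^ 2) • ρ = (n : ℂ) • 1 := by
    simpa using card_smul_eq_of_sum_trace_mul_smul_eq ρ U (star ∘ U)
      (fun j => (mem_unitaryGroup_iff').1 (hUu j)) hexp
  intro X
  have hn' : (n : ℂ) ≠ 0 := Nat.cast_ne_zero.mpr hn.ne'
  have key : (n : ℂ) ^ 2 * trace (ρ * X) = n * trace X := by
    simpa [smul_mul] using congrArg (fun M => trace (M * X)) hρ_scalar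
  rw [hρ, eq_div_iff hn']
  exact mul_left_cancel₀ hn' (by linear_combination key)

/-- If φ is a faithful state on M_n(ℂ) such that M_n(ℂ) with inner product
⟨X,Y⟩ = φ(X*Y) admits an orthonormal basis of n² unitaries, then φ is the
normalized trace φ(X) = tr(X)/n. -/
theorem faithful_state_with_unitary_onb_is_trace
    (n : ℕ) (hn : 0 < n)
    (φ : Matrix (Fin n) (Fin n) ℂ →ₗ[ℂ] ℂ)
    (hunital : φ 1 = 1)
    (hpos : ∀ X, 0 ≤ φ (star X * X))
    (hfaithful : ∀ X, φ (star X * X) = 0 → X = 0)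
    (U : Fin (n ^ 2) → Matrix (Fin n) (Fin n) ℂ)
    (hUu : ∀ j, U j ∈ Matrix.unitaryGroup (Fin n) ℂ)
    (horth : ∀ j k, φ (star (U j) * U k) = if j = k then 1 else 0) :
    ∀ X, φ X = Matrix.trace X / n :=
  faithful_state_with_unitary_onb_is_trace_general n hn φ U hUu horth
end

section
/- If (ℬ ⊆ 𝒜, E) is a subalgebra system admitting a (not necessarily orthogonal) Pimsner–Popa basis with d elements, then Aᵗ ñ ≤ d m̃ entrywise, where A is the inclusion matrix and ñ, m̃ the dimension vectors. -/
/-!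
Let `Q_j` be the `j`-th minimal central projection of `ℬ`. Right multiplication by `ι(Y)`
acts on the column block `𝒜 Q_j` only through `Y_j`, as right multiplication by `1 ⊗ Y_j`.
Hence cutting the basis expansion `X = ∑ₜ Wₜ ι(E(Wₜ* X))` down to `𝒜 Q_j` exhibits `𝒜 Q_j` as
the image of the linear map `(Yₜ)ₜ ↦ ∑ₜ (Wₜ Q_j)(1 ⊗ Yₜ)` on `d` copies of `M_{m_j}`. Comparing
dimensions gives `∑ᵢ nᵢ aᵢⱼ mⱼ ≤ d mⱼ²`.
-/

open Finset Matrix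

/-- The unital inclusion of the multi-matrix algebra ℬ = ⊕_j M_{m_j} into
𝒜 = ⊕_i M_{n_i}, where M_{m_j} appears a_{ij} times in the i-th summand. -/
def multiMatrixIncl (s r : ℕ) (m : Fin r → ℕ) (a : Fin s → Fin r → ℕ)
    (Y : ∀ j, Matrix (Fin (m j)) (Fin (m j)) ℂ) :
    ∀ i, Matrix ((j : Fin r) × (Fin (a i j) × Fin (m j)))
      ((j : Fin r) × (Fin (a i j) × Fin (m j))) ℂ :=
  fun i p q =>
    if h : p.1 = q.1 then
      (if (h ▸ p.2).1 = q.2.1 then Y q.1 ((h ▸ p.2).2) q.2.2 else 0)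
    else 0

open scoped Kronecker

abbrev InclIdx {s r : ℕ} (m : Fin r → ℕ) (a : Fin s → Fin r → ℕ) (i : Fin s) : Type :=
  (j : Fin r) × (Fin (a i j) × Fin (m j))

/-- `X ↦ X Q_j`, with `𝒜 Q_j` stored as its nonzero columns. -/
def colBlock {s r : ℕ} (m : Fin r → ℕ) (a : Fin s → Fin r → ℕ) (j : Fin r) :
    (∀ i, Matrix (InclIdx m a i) (InclIdx m a i) ℂ) →ₗ[ℂ]
      ∀ i, Matrix (InclIdx m a i) (Fin (a i j) × Fin (m j)) ℂ where
  toFun X i p c := X i p ⟨j, c⟩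
  map_add' _ _ := rfl
  map_smul' _ _ := rfl

variable {s r : ℕ} {m : Fin r → ℕ} {a : Fin s → Fin r → ℕ}

@[simp]
theorem colBlock_apply (j : Fin r) (X : ∀ i, Matrix (InclIdx m a i) (InclIdx m a i) ℂ)
    (i : Fin s) (p : InclIdx m a i) (c : Fin (a i j) × Fin (m j)) :
    colBlock m a j X i p c = X i p ⟨j, c⟩ :=
  rfl

theorem colBlock_surjective (j : Fin r) : Function.Surjective (colBlock m a j) := by
  intro M
  refine ⟨fun i p q => if h : q.1 = j then M i p (h ▸ q.2) else 0, ?_⟩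
  ext i p c
  exact dif_pos rfl

theorem colBlock_mul_multiMatrixIncl (j : Fin r)
    (U : ∀ i, Matrix (InclIdx m a i) (InclIdx m a i) ℂ)
    (Z : ∀ j, Matrix (Fin (m j)) (Fin (m j)) ℂ) (i : Fin s) :
    colBlock m a j (U * multiMatrixIncl s r m a Z) i =
      colBlock m a j U i * ((1 : Matrix (Fin (a i j)) (Fin (a i j)) ℂ) ⊗ₖ Z j) := by
  ext p ⟨c, y⟩
  rw [colBlock_apply, Pi.mul_apply, Matrix.mul_apply, Matrix.mul_apply,
    ← Finset.univ_sigma_univ, Finset.sum_sigma, Finset.sum_eq_single j]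
  · simp [multiMatrixIncl, one_apply, eq_comm]
  · intro j' _ hj'
    simp [multiMatrixIncl, hj']
  · simp

def colBlockCombination {d : ℕ} (W : Fin d → ∀ i, Matrix (InclIdx m a i) (InclIdx m a i) ℂ)
    (j : Fin r) :
    (Fin d → Matrix (Fin (m j)) (Fin (m j)) ℂ) →ₗ[ℂ]
      ∀ i, Matrix (InclIdx m a i) (Fin (a i j) × Fin (m j)) ℂ where
  toFun Y i := ∑ t, colBlock m a j (W t) i * ((1 : Matrix (Fin (a i j)) (Fin (a i j)) ℂ) ⊗ₖ Y t)
  map_add' Y Z := by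
    ext i : 1
    simp only [Pi.add_apply, kronecker_add, Matrix.mul_add, Finset.sum_add_distrib]
  map_smul' c Y := by
    ext i : 1
    simp [kronecker_smul, Finset.smul_sum]

theorem colBlock_sum_mul_multiMatrixIncl {d : ℕ}
    (W : Fin d → ∀ i, Matrix (InclIdx m a i) (InclIdx m a i) ℂ)
    (Z : Fin d → ∀ j, Matrix (Fin (m j)) (Fin (m j)) ℂ) (j : Fin r) :
    colBlock m a j (∑ t, W t * multiMatrixIncl s r m a (Z t)) =
      colBlockCombination W j fun t => Z t j := by
  ext i : 1
  simp only [map_sum, Finset.sum_apply, colBlock_mul_multiMatrixIncl]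
  rfl

theorem colBlockCombination_surjective {d : ℕ}
    (W : Fin d → ∀ i, Matrix (InclIdx m a i) (InclIdx m a i) ℂ)
    (hspan : ∀ X, ∃ Z : Fin d → ∀ j, Matrix (Fin (m j)) (Fin (m j)) ℂ,
      X = ∑ t, W t * multiMatrixIncl s r m a (Z t)) (j : Fin r) :
    Function.Surjective (colBlockCombination W j) := by
  intro M
  obtain ⟨X, rfl⟩ := colBlock_surjective j M
  obtain ⟨Z, rfl⟩ := hspan X
  exact ⟨fun t => Z t j, (colBlock_sum_mul_multiMatrixIncl W Z j).symm⟩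

theorem pimsner_popa_basis_ineq_general
    (s r d : ℕ) (n : Fin s → ℕ) (m : Fin r → ℕ) (a : Fin s → Fin r → ℕ)
    (hm : ∀ j, 0 < m j)
    (hdim : ∀ i, ∑ j, a i j * m j = n i)  -- A m̃ = ñ
    (E : (∀ i, Matrix ((j : Fin r) × (Fin (a i j) × Fin (m j)))
            ((j : Fin r) × (Fin (a i j) × Fin (m j))) ℂ) →ₗ[ℂ]
          (∀ j, Matrix (Fin (m j)) (Fin (m j)) ℂ))
    -- a Pimsner–Popa basis with d elements
    (W : Fin d → ∀ i, Matrix ((j : Fin r) × (Fin (a i j) × Fin (m j)))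
          ((j : Fin r) × (Fin (a i j) × Fin (m j))) ℂ)
    (hbasis : ∀ X, X = ∑ t, W t * multiMatrixIncl s r m a (E (star (W t) * X))) :
    ∀ j, ∑ i, a i j * n i ≤ d * m j := by
  intro j
  have hle := LinearMap.finrank_le_finrank_of_surjective
    (colBlockCombination_surjective W (fun X => ⟨_, hbasis X⟩) j)
  simp only [Module.finrank_pi_fintype, Module.finrank_matrix, Module.finrank_self,
    Fintype.card_sigma, Fintype.card_prod, Fintype.card_fin, mul_one, hdim, Finset.sum_const,
    Finset.card_univ, smul_eq_mul] at hle
  refine Nat.le_of_mul_le_mul_right ?_ (hm j)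
  calc (∑ i, a i j * n i) * m j = ∑ i, n i * (a i j * m j) := by
        rw [Finset.sum_mul]; exact Finset.sum_congr rfl fun i _ => by ring
    _ ≤ d * (m j * m j) := hle
    _ = d * m j * m j := by ring

/-- If a subalgebra system (ℬ ⊆ 𝒜, E) admits a (not necessarily orthogonal)
Pimsner–Popa basis with d elements, then Aᵗ ñ ≤ d m̃ entrywise. -/
theorem pimsner_popa_basis_ineq
    (s r d : ℕ) (n : Fin s → ℕ) (m : Fin r → ℕ) (a : Fin s → Fin r → ℕ)
    (hn : ∀ i, 0 < n i) (hm : ∀ j, 0 < m j)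
    (hdim : ∀ i, ∑ j, a i j * m j = n i)  -- A m̃ = ñ
    (E : (∀ i, Matrix ((j : Fin r) × (Fin (a i j) × Fin (m j)))
            ((j : Fin r) × (Fin (a i j) × Fin (m j))) ℂ) →ₗ[ℂ]
          (∀ j, Matrix (Fin (m j)) (Fin (m j)) ℂ))
    -- E is a conditional expectation onto ℬ
    (hEfix : ∀ Y, E (multiMatrixIncl s r m a Y) = Y)
    (hEbim : ∀ Y Z X, E (multiMatrixIncl s r m a Y * X * multiMatrixIncl s r m a Z)
      = Y * E X * Z)
    -- a Pimsner–Popa basis with d elements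
    (W : Fin d → ∀ i, Matrix ((j : Fin r) × (Fin (a i j) × Fin (m j)))
          ((j : Fin r) × (Fin (a i j) × Fin (m j))) ℂ)
    (hbasis : ∀ X, X = ∑ t, W t * multiMatrixIncl s r m a (E (star (W t) * X))) :
    ∀ j, ∑ i, a i j * n i ≤ d * m j :=
  pimsner_popa_basis_ineq_general s r d n m a hm hdim E W hbasis
end

section
/- Let 𝒜 = ⊕ᵢ M_{nᵢ} be a multi-matrix algebra, ℬ = ℂ^r an abelian subalgebra with inclusion matrix [a_{ij}] satisfying the spectral condition Σᵢ nᵢ a_{ij} = d for all j, and E the Markov-trace-preserving conditional expectation. Then for the quasi-circulant unitaries W(t) = V^t U^t defined blockwise by Vᵢ = C(1, ω, ω², …, ω^{nᵢ-1}) with ω = e^{2πi/d} and U diagonal with (i,j,k)-entry e^{2πi(Σ_{x<i} n_x a_{xj} + k nᵢ)/d}, one has E(W(t)) = 0 for all t with 1 ≤ t ≤ d-1. -/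
open Finset Matrix

-- geometric/exponential helper lemmas
lemma qexp_pow_eq_one (N : ℕ) (hN : 0 < N) (c : ℤ) :
    (Complex.exp (2 * Real.pi * Complex.I * c / N)) ^ N = 1 := by
  rw [← Complex.exp_nat_mul]
  have hNC : (N : ℂ) ≠ 0 := Nat.cast_ne_zero.mpr hN.ne'
  have : (N : ℂ) * (2 * Real.pi * Complex.I * c / N) = c * (2 * Real.pi * Complex.I) := by
    field_simp
  rw [this, Complex.exp_int_mul_two_pi_mul_I]

lemma qexp_geom_zero (N : ℕ) (hN : 0 < N) (c : ℤ) (hc : ¬ ((N : ℤ) ∣ c)) :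
    ∑ y ∈ Finset.range N, (Complex.exp (2 * Real.pi * Complex.I * c / N)) ^ y = 0 := by
  have hNC : (N : ℂ) ≠ 0 := Nat.cast_ne_zero.mpr hN.ne'
  have hζ1 : Complex.exp (2 * Real.pi * Complex.I * c / N) ≠ 1 := by
    intro h
    rw [Complex.exp_eq_one_iff] at h
    obtain ⟨m, hm⟩ := h
    apply hc
    refine ⟨m, ?_⟩
    rw [div_eq_iff hNC] at hm
    have h3 : (2 * Real.pi * Complex.I) * (c : ℂ) =
        (2 * Real.pi * Complex.I) * ((m : ℂ) * N) := by linear_combination hm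
    have h4 := mul_left_cancel₀ Complex.two_pi_I_ne_zero h3
    exact_mod_cast h4.trans (mul_comm _ _)
  rw [geom_sum_eq hζ1, qexp_pow_eq_one N hN c, sub_self, zero_div]

-- telescoping blocks lemma over ℕ
lemma qblocksNat (f : ℕ → ℂ) (c : ℕ → ℕ) :
    ∀ s : ℕ, ∑ i ∈ Finset.range s, ∑ k ∈ Finset.range (c i),
        f ((∑ x ∈ Finset.range i, c x) + k)
      = ∑ m ∈ Finset.range (∑ i ∈ Finset.range s, c i), f m := by
  intro s
  induction s with
  | zero => simp
  | succ s ih =>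
    rw [Finset.sum_range_succ, ih, Finset.sum_range_succ (f := c), Finset.sum_range_add]

-- telescoping blocks lemma over Fin
lemma qblocksFin (f : ℕ → ℂ) {s : ℕ} (c : Fin s → ℕ) :
    ∑ i : Fin s, ∑ k ∈ Finset.range (c i), f ((∑ x ∈ Finset.Iio i, c x) + k)
      = ∑ m ∈ Finset.range (∑ i : Fin s, c i), f m := by
  classical
  set c' : ℕ → ℕ := fun x => if h : x < s then c ⟨x, h⟩ else 0 with hc'
  have hcv : ∀ i : Fin s, c' i.val = c i := fun i => by simp [hc', i.isLt]
  have hIio : ∀ i : Fin s, ∑ x ∈ Finset.Iio i, c x = ∑ x ∈ Finset.range i.val, c' x := by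
    intro i
    rw [← Nat.Iio_eq_range, ← Fin.map_valEmbedding_Iio, Finset.sum_map]
    exact Finset.sum_congr rfl fun x _ => (hcv x).symm
  have htot : ∑ i : Fin s, c i = ∑ i ∈ Finset.range s, c' i := by
    rw [← Fin.sum_univ_eq_sum_range]
    exact Finset.sum_congr rfl fun i _ => (hcv i).symm
  calc ∑ i : Fin s, ∑ k ∈ Finset.range (c i), f ((∑ x ∈ Finset.Iio i, c x) + k)
      = ∑ i : Fin s, ∑ k ∈ Finset.range (c' (i : ℕ)),
          f ((∑ x ∈ Finset.range (i : ℕ), c' x) + k) := by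
        refine Finset.sum_congr rfl fun i _ => ?_
        rw [hcv, hIio]
    _ = ∑ i ∈ Finset.range s, ∑ k ∈ Finset.range (c' i),
          f ((∑ x ∈ Finset.range i, c' x) + k) :=
        Fin.sum_univ_eq_sum_range
          (fun i => ∑ k ∈ Finset.range (c' i), f ((∑ x ∈ Finset.range i, c' x) + k)) s
    _ = ∑ m ∈ Finset.range (∑ i ∈ Finset.range s, c' i), f m := qblocksNat f c' s
    _ = ∑ m ∈ Finset.range (∑ i : Fin s, c i), f m := by rw [htot]


open Finset Matrix

section AbelianCase

variable (s r : ℕ) (a : Fin s → Fin r → ℕ)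

/-- Index set of the i-th summand adapted to ℂ^r ⊆ 𝒜: (j,k) labels u_{ijk}. -/
abbrev qIdx (i : Fin s) := (j : Fin r) × Fin (a i j)

/-- Lexicographic position of u_{ijk} within the i-th summand. -/
def qPos (i : Fin s) (p : qIdx s r a i) : ℕ :=
  (∑ j' ∈ Finset.univ.filter (fun j' => j' < p.1), a i j') + (p.2 : ℕ)

/-- The finite Fourier matrix of the i-th summand (of size nᵢ), with respect to
the lexicographically ordered adapted basis. -/
noncomputable def qFourier (n : Fin s → ℕ) (i : Fin s) :
    Matrix (qIdx s r a i) (qIdx s r a i) ℂ :=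
  fun p p' => (1 / Real.sqrt (n i) : ℝ) *
    Complex.exp (2 * Real.pi * Complex.I *
      ((qPos s r a i p * qPos s r a i p' : ℕ) / (n i : ℂ)))

/-- The circulant unitary Vᵢ = C(1, ε(b), ε(2b), …, ε((nᵢ-1)b)), b = 1/d,
i.e. Vᵢ = Fᵢ* D(ε(y/d))_{y<nᵢ} Fᵢ in the adapted basis. -/
noncomputable def qCirc (n : Fin s → ℕ) (d : ℕ) (i : Fin s) :
    Matrix (qIdx s r a i) (qIdx s r a i) ℂ :=
  (qFourier s r a n i)ᴴ *
    Matrix.diagonal (fun p =>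
      Complex.exp (2 * Real.pi * Complex.I * ((qPos s r a i p : ℕ) / (d : ℂ)))) *
    qFourier s r a n i

/-- The diagonal unitary U with (i,j,k)-diagonal entry
ε((∑_{x<i} n_x a_{xj} + k nᵢ)/d). -/
noncomputable def qDiag (n : Fin s → ℕ) (d : ℕ) (i : Fin s) :
    Matrix (qIdx s r a i) (qIdx s r a i) ℂ :=
  Matrix.diagonal fun p =>
    Complex.exp (2 * Real.pi * Complex.I *
      (((∑ x ∈ Finset.univ.filter (fun x => x < i), n x * a x p.1) +
          (p.2 : ℕ) * n i : ℕ) / (d : ℂ)))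

/-- The conditional expectation onto ℂ^r preserving the trace with trace
vector ñ: the j-th component of E(⊕ᵢ Xᵢ) is (1/d) ∑_{i,k} nᵢ ⟨u_{ijk}, Xᵢ u_{ijk}⟩. -/
noncomputable def qCondExp (n : Fin s → ℕ) (d : ℕ)
    (X : ∀ i, Matrix (qIdx s r a i) (qIdx s r a i) ℂ) : Fin r → ℂ :=
  fun j => (1 / d : ℂ) * ∑ i, ∑ p : qIdx s r a i,
    if p.1 = j then (n i : ℂ) * X i p p else 0


lemma qfilter_eq_Iio {m : ℕ} (j : Fin m) :
    Finset.univ.filter (fun j' => j' < j) = Finset.Iio j := by ext x; simp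

lemma qPos_eq (i : Fin s) (p : qIdx s r a i) :
    qPos s r a i p = (∑ j' ∈ Finset.Iio p.1, a i j') + (p.2 : ℕ) := by
  rw [qPos, qfilter_eq_Iio]

lemma qT_mono (i : Fin s) {j j' : Fin r} (h : j < j') :
    (∑ x ∈ Finset.Iio j, a i x) + a i j ≤ ∑ x ∈ Finset.Iio j', a i x := by
  have hsub : insert j (Finset.Iio j) ⊆ Finset.Iio j' := by
    intro x hx
    rcases Finset.mem_insert.mp hx with h1 | h1
    · exact Finset.mem_Iio.mpr (h1 ▸ h)
    · exact Finset.mem_Iio.mpr (lt_trans (Finset.mem_Iio.mp h1) h)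
  calc (∑ x ∈ Finset.Iio j, a i x) + a i j
      = ∑ x ∈ insert j (Finset.Iio j), a i x := by
        rw [Finset.sum_insert (by simp)]; ring
    _ ≤ _ := Finset.sum_le_sum_of_subset hsub

lemma qT_le_univ (i : Fin s) (j : Fin r) :
    (∑ x ∈ Finset.Iio j, a i x) + a i j ≤ ∑ x, a i x := by
  calc (∑ x ∈ Finset.Iio j, a i x) + a i j
      = ∑ x ∈ insert j (Finset.Iio j), a i x := by
        rw [Finset.sum_insert (by simp)]; ring
    _ ≤ _ := Finset.sum_le_sum_of_subset (Finset.subset_univ _)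

lemma qPos_lt (i : Fin s) (p : qIdx s r a i) : qPos s r a i p < ∑ j, a i j := by
  have h1 := qT_le_univ s r a i p.1
  have h2 := p.2.isLt
  rw [qPos_eq]
  omega

lemma qPos_inj (i : Fin s) : Function.Injective (qPos s r a i) := by
  rintro ⟨j, k⟩ ⟨j', k'⟩ h
  rw [qPos_eq, qPos_eq] at h
  simp only at h
  rcases lt_trichotomy j j' with hlt | heq | hgt
  · exfalso
    have hm := qT_mono s r a i hlt
    have hk := k.isLt
    omega
  · subst heq
    have hkk : k = k' := Fin.ext (by omega)
    rw [hkk]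
  · exfalso
    have hm := qT_mono s r a i hgt
    have hk := k'.isLt
    omega

lemma qSum (i : Fin s) (f : ℕ → ℂ) :
    ∑ p : qIdx s r a i, f (qPos s r a i p) = ∑ m ∈ Finset.range (∑ j, a i j), f m := by
  rw [← qblocksFin f (fun j => a i j)]
  rw [← Finset.univ_sigma_univ, Finset.sum_sigma]
  refine Finset.sum_congr rfl fun j _ => ?_
  rw [← Fin.sum_univ_eq_sum_range (fun k => f ((∑ x ∈ Finset.Iio j, a i x) + k)) (a i j)]
  refine Finset.sum_congr rfl fun k _ => ?_
  rw [qPos_eq]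


lemma qF_prod (n : Fin s → ℕ) (i : Fin s) (hni : 0 < n i) (q p p' : qIdx s r a i) :
    star (qFourier s r a n i q p) * qFourier s r a n i q p'
      = ((n i : ℂ))⁻¹ * (Complex.exp (2 * Real.pi * Complex.I *
          (((qPos s r a i p' : ℤ) - (qPos s r a i p : ℤ)) : ℤ) / (n i : ℂ))) ^ (qPos s r a i q) := by
  have hNC : ((n i : ℕ) : ℂ) ≠ 0 := Nat.cast_ne_zero.mpr hni.ne'
  have hNR : (0:ℝ) ≤ (n i : ℝ) := Nat.cast_nonneg _
  simp only [qFourier, star_mul', Complex.star_def, ← Complex.exp_conj, Complex.conj_ofReal]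
  have hconj : (starRingEnd ℂ) (2 * Real.pi * Complex.I *
      ((qPos s r a i q * qPos s r a i p : ℕ) / (n i : ℂ)))
      = -(2 * Real.pi * Complex.I * ((qPos s r a i q * qPos s r a i p : ℕ) / (n i : ℂ))) := by
    simp only [_root_.map_mul, map_div₀, Complex.conj_I, Complex.conj_ofReal, map_ofNat,
      map_natCast]
    ring
  rw [hconj]
  rw [← Complex.exp_nat_mul]
  have hre : ((1 / Real.sqrt (n i) : ℝ) : ℂ) * ((1 / Real.sqrt (n i) : ℝ) : ℂ)
      = ((n i : ℂ))⁻¹ := by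
    rw [← Complex.ofReal_mul]
    have h5 : (1 / Real.sqrt (n i)) * (1 / Real.sqrt (n i)) = ((n i : ℝ))⁻¹ := by
      rw [div_mul_div_comm, one_mul, Real.mul_self_sqrt hNR, one_div]
    rw [h5]
    push_cast
    rfl
  have hmul : Complex.exp (-(2 * Real.pi * Complex.I *
        ((qPos s r a i q * qPos s r a i p : ℕ) / (n i : ℂ)))) *
      Complex.exp (2 * Real.pi * Complex.I * ((qPos s r a i q * qPos s r a i p' : ℕ) / (n i : ℂ)))
      = Complex.exp ((qPos s r a i q : ℕ) * (2 * Real.pi * Complex.I *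
          (((qPos s r a i p' : ℤ) - (qPos s r a i p : ℤ)) : ℤ) / (n i : ℂ))) := by
    rw [← Complex.exp_add]
    congr 1
    push_cast
    field_simp
    ring
  rw [mul_mul_mul_comm, hre, hmul]


lemma qF_unit (n : Fin s → ℕ) (i : Fin s) (hni : 0 < n i) (hrowi : ∑ j, a i j = n i) :
    (qFourier s r a n i)ᴴ * qFourier s r a n i = 1 := by
  ext p p'
  rw [Matrix.mul_apply]
  simp only [Matrix.conjTranspose_apply]
  set c : ℤ := (qPos s r a i p' : ℤ) - (qPos s r a i p : ℤ) with hc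
  have hsum : ∑ q, star (qFourier s r a n i q p) * qFourier s r a n i q p'
      = ((n i : ℂ))⁻¹ * ∑ m ∈ Finset.range (n i),
          (Complex.exp (2 * Real.pi * Complex.I * (c : ℂ) / (n i : ℂ))) ^ m := by
    rw [Finset.sum_congr rfl (fun q _ => qF_prod s r a n i hni q p p'), ← Finset.mul_sum]
    rw [qSum s r a i (fun m => (Complex.exp (2 * Real.pi * Complex.I * (c : ℂ) / (n i : ℂ))) ^ m),
      hrowi]
  rw [hsum]
  by_cases hpp : p = p'
  · subst hpp
    have hc0 : c = 0 := by simp [hc]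
    rw [hc0]
    simp only [Int.cast_zero, mul_zero, zero_div, Complex.exp_zero, one_pow,
      Finset.sum_const, Finset.card_range, nsmul_eq_mul, mul_one]
    rw [inv_mul_cancel₀ (Nat.cast_ne_zero.mpr hni.ne' : ((n i : ℕ) : ℂ) ≠ 0)]
    rw [Matrix.one_apply_eq]
  · have hcne : c ≠ 0 := by
      intro h0
      exact hpp (qPos_inj s r a i (by omega))
    have hlt1 := qPos_lt s r a i p
    have hlt2 := qPos_lt s r a i p'
    have hndvd : ¬ ((n i : ℤ) ∣ c) := by
      intro hdvd
      have h1 : (n i : ℤ) ∣ |c| := (dvd_abs _ _).mpr hdvd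
      have h2 : (n i : ℤ) ≤ |c| := Int.le_of_dvd (abs_pos.mpr hcne) h1
      rw [hrowi] at hlt1 hlt2
      have habs : |c| < (n i : ℤ) := by rw [abs_lt]; omega
      omega
    rw [qexp_geom_zero (n i) hni c hndvd, mul_zero, Matrix.one_apply_ne hpp]


end AbelianCase

lemma qconj_pow {α : Type*} [Fintype α] [DecidableEq α] (F D : Matrix α α ℂ)
    (h1 : Fᴴ * F = 1) (t : ℕ) : (Fᴴ * D * F) ^ t = Fᴴ * D ^ t * F := by
  have h2 : F * Fᴴ = 1 := mul_eq_one_comm.mp h1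
  induction t with
  | zero => rw [pow_zero, pow_zero, Matrix.mul_one, h1]
  | succ t ih =>
      rw [pow_succ, pow_succ, ih]
      simp only [Matrix.mul_assoc]
      rw [← Matrix.mul_assoc F Fᴴ, h2, Matrix.one_mul]

lemma qdiag_entry {α : Type*} [Fintype α] [DecidableEq α] (F : Matrix α α ℂ) (g : α → ℂ)
    (p : α) : ((Fᴴ * Matrix.diagonal g * F) : Matrix α α ℂ) p p
      = ∑ q, star (F q p) * F q p * g q := by
  rw [Matrix.mul_apply]
  refine Finset.sum_congr rfl fun q _ => ?_
  rw [Matrix.mul_diagonal, Matrix.conjTranspose_apply]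
  ring

/-- In the abelian case ℬ = ℂ^r ⊆ 𝒜 = ⊕ᵢ M_{nᵢ} satisfying the spectral
condition ∑ᵢ nᵢ a_{ij} = d, the quasi-circulant unitaries W(t) = V^t U^t
satisfy E(W(t)) = 0 for all 1 ≤ t ≤ d-1, E being the Markov-trace-preserving
conditional expectation. -/
theorem quasi_circulant_expectation_zero
    (s r d : ℕ) (hd : 0 < d) (n : Fin s → ℕ) (hn : ∀ i, 0 < n i)
    (a : Fin s → Fin r → ℕ)
    (hrow : ∀ i, ∑ j, a i j = n i)
    (hspec : ∀ j, ∑ i, n i * a i j = d) :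
    ∀ t : ℕ, 1 ≤ t → t ≤ d - 1 →
      qCondExp s r a n d
        (fun i => (qCirc s r a n d i) ^ t * (qDiag s r a n d i) ^ t) = 0 := by
  intro t ht1 ht2
  funext j
  set ζ : ℂ := Complex.exp (2 * Real.pi * Complex.I * (((t : ℤ) : ℂ)) / (d : ℂ)) with hζ
  have hpow : ∀ m : ℕ, Complex.exp (2 * Real.pi * Complex.I * ((m : ℕ) / (d : ℂ))) ^ t
      = ζ ^ m := by
    intro m
    rw [hζ, ← Complex.exp_nat_mul, ← Complex.exp_nat_mul]
    congr 1
    push_cast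
    ring
  have hcirc : ∀ (i : Fin s) (p : qIdx s r a i), ((qCirc s r a n d i) ^ t) p p
      = (n i : ℂ)⁻¹ * ∑ m ∈ Finset.range (n i), ζ ^ m := by
    intro i p
    rw [qCirc, qconj_pow _ _ (qF_unit s r a n i (hn i) (hrow i)), Matrix.diagonal_pow,
      qdiag_entry]
    have hterm : ∀ q : qIdx s r a i,
        star (qFourier s r a n i q p) * qFourier s r a n i q p *
          (((fun p' => Complex.exp (2 * Real.pi * Complex.I *
            ((qPos s r a i p' : ℕ) / (d : ℂ)))) ^ t) q)
        = (n i : ℂ)⁻¹ * ζ ^ (qPos s r a i q) := by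
      intro q
      rw [Pi.pow_apply, hpow]
      have h0 := qF_prod s r a n i (hn i) q p p
      rw [sub_self] at h0
      simp only [Int.cast_zero, mul_zero, zero_div, Complex.exp_zero, one_pow, mul_one] at h0
      rw [h0]
    rw [Finset.sum_congr rfl fun q _ => hterm q, ← Finset.mul_sum,
      qSum s r a i (fun m => ζ ^ m), hrow i]
  have hblock : ∀ i : Fin s,
      (∑ m ∈ Finset.range (n i), ζ ^ m) *
        ∑ k ∈ Finset.range (a i j), ζ ^ ((∑ x ∈ Finset.Iio i, n x * a x j) + (k * n i))
      = ∑ m ∈ Finset.range (n i * a i j),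
          ζ ^ ((∑ x ∈ Finset.Iio i, n x * a x j) + m) := by
    intro i
    have hb := qblocksNat (fun m => ζ ^ ((∑ x ∈ Finset.Iio i, n x * a x j) + m))
      (fun _ => n i) (a i j)
    simp only [Finset.sum_const, Finset.card_range, smul_eq_mul] at hb
    rw [mul_comm (n i) (a i j), ← hb, Finset.mul_sum]
    refine Finset.sum_congr rfl fun k _ => ?_
    rw [Finset.sum_mul]
    refine Finset.sum_congr rfl fun y _ => ?_
    rw [← pow_add]
    congr 1
    omega
  have hstep : ∀ i : Fin s, (∑ p : qIdx s r a i, if p.1 = j then (n i : ℂ) *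
      ((qCirc s r a n d i ^ t * qDiag s r a n d i ^ t) p p) else 0)
      = ∑ m ∈ Finset.range (n i * a i j),
          ζ ^ ((∑ x ∈ Finset.Iio i, n x * a x j) + m) := by
    intro i
    have hX : ∀ p : qIdx s r a i, (qCirc s r a n d i ^ t * qDiag s r a n d i ^ t) p p
        = ((n i : ℂ)⁻¹ * ∑ m ∈ Finset.range (n i), ζ ^ m) *
          ζ ^ ((∑ x ∈ Finset.univ.filter (fun x => x < i), n x * a x p.1)
            + (p.2 : ℕ) * n i) := by
      intro p
      rw [qDiag, Matrix.diagonal_pow, Matrix.mul_diagonal, hcirc i p, Pi.pow_apply, hpow]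
    rw [Finset.sum_congr rfl (fun p _ => by rw [hX p])]
    rw [← Finset.univ_sigma_univ, Finset.sum_sigma]
    have hpull : ∀ j' : Fin r, (∑ k : Fin (a i j'), if j' = j then (n i : ℂ) *
        (((n i : ℂ)⁻¹ * ∑ m ∈ Finset.range (n i), ζ ^ m) *
          ζ ^ ((∑ x ∈ Finset.univ.filter (fun x => x < i), n x * a x j')
            + (k : ℕ) * n i)) else 0)
        = if j' = j then (∑ k : Fin (a i j'), (n i : ℂ) *
        (((n i : ℂ)⁻¹ * ∑ m ∈ Finset.range (n i), ζ ^ m) *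
          ζ ^ ((∑ x ∈ Finset.univ.filter (fun x => x < i), n x * a x j')
            + (k : ℕ) * n i))) else 0 := by
      intro j'
      split_ifs <;> simp
    rw [Finset.sum_congr rfl (fun j' _ => hpull j'), Finset.sum_ite_eq' Finset.univ j,
      if_pos (Finset.mem_univ j)]
    have hcancel : ∀ z : ℂ, (n i : ℂ) * (((n i : ℂ)⁻¹ * ∑ m ∈ Finset.range (n i), ζ ^ m) * z)
        = (∑ m ∈ Finset.range (n i), ζ ^ m) * z := by
      intro z
      have hni : ((n i : ℕ) : ℂ) ≠ 0 := Nat.cast_ne_zero.mpr (hn i).ne'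
      field_simp
    rw [Finset.sum_congr rfl (fun k _ => hcancel _), ← Finset.mul_sum]
    rw [qfilter_eq_Iio]
    rw [← hblock i]
    congr 1
    rw [← Fin.sum_univ_eq_sum_range (fun k => ζ ^ ((∑ x ∈ Finset.Iio i, n x * a x j) + k * n i))
      (a i j)]
  rw [qCondExp, Pi.zero_apply]
  rw [Finset.sum_congr rfl (fun i _ => hstep i)]
  rw [qblocksFin (fun m => ζ ^ m) (fun i => n i * a i j)]
  have hndvd : ¬ ((d : ℤ) ∣ (t : ℤ)) := by
    intro hdvd
    have h1 : (d : ℤ) ≤ (t : ℤ) := Int.le_of_dvd (by exact_mod_cast ht1) hdvd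
    omega
  rw [hspec j, hζ, qexp_geom_zero d hd (t : ℤ) hndvd, mul_zero]
end

section
/- Let ℬ = M_m ⊆ 𝒜 = ⊕ᵢ M_{nᵢ} with each nᵢ = m·kᵢ. Then the inclusion (M_m ⊆ 𝒜) is isomorphic to the tensor product of the trivial inclusion (M_m ⊆ M_m) with the inclusion (ℂ ⊆ ⊕ᵢ M_{kᵢ}); consequently, if E preserves the Markov trace, (M_m ⊆ 𝒜, E) admits a unitary orthonormal basis of cardinality Σᵢ kᵢ². -/
open Finset Matrix
open scoped TensorProduct

section FullSub

variable (s m : ℕ) (k : Fin s → ℕ)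

/-- The unital inclusion of ℬ = M_m into 𝒜 = ⊕ᵢ M_{nᵢ} with nᵢ = m·kᵢ:
Y ↦ ⊕ᵢ (Y ⊗ 1_{kᵢ}). -/
def fullIncl (Y : Matrix (Fin m) (Fin m) ℂ) :
    ∀ i, Matrix (Fin m × Fin (k i)) (Fin m × Fin (k i)) ℂ :=
  fun _ p q => Y p.1 q.1 * (if p.2 = q.2 then 1 else 0)

/-- The Markov trace on 𝒜 = ⊕ᵢ M_{m·kᵢ}, with trace vector the dimension
vector ñ = (m·kᵢ)ᵢ. -/
noncomputable def markovTrace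
    (X : ∀ i, Matrix (Fin m × Fin (k i)) (Fin m × Fin (k i)) ℂ) : ℂ :=
  (∑ i, ((m * k i : ℕ) : ℂ) * Matrix.trace (X i)) / (∑ i, ((m * k i : ℕ) : ℂ) ^ 2)

end FullSub

open scoped Kronecker

/-!
Under the Kronecker isomorphism `𝒜 ≅ M_m ⊗ C` with `C = ⊕ᵢ M_{kᵢ}`, the inclusion becomes
`Y ↦ Y ⊗ 1`, and a trace-preserving conditional expectation becomes `id ⊗ φ`, where
`φ c = (∑ᵢ kᵢ tr cᵢ) / ∑ᵢ kᵢ²` is the trace-vector state: on `1 ⊗ C` the expectation takes values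
commuting with `M_m`, hence scalars, and the Markov trace identifies the scalar. Hence
`Wₜ = 1 ⊗ uₜ` is a unitary orthonormal basis as soon as the `uₜ` are `K = ∑ᵢ kᵢ²` unitaries of `C`
orthonormal for `φ`. For these take, in block `i`, `diag(z^(oᵢ + kᵢ a)) · Fᵢ · diag(z^b)` with
`Fᵢ` the unitary Fourier matrix, `oᵢ = ∑_{j<i} kⱼ²` and `z = ζ^t`, `ζ` a primitive `K`-th root of
unity. Since `|Fᵢ a b|² = 1/kᵢ` and the exponents `oᵢ + kᵢ a + b` run through `0, …, K-1` exactly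
once, `φ(uₜ* uₜ')` is the geometric sum `(1/K) ∑_{n<K} (ζ^(t'-t))^n = δ_{tt'}`.
-/

section KroneckerPi

variable (R : Type*) [CommSemiring R] (n : Type*) [Fintype n] [DecidableEq n]
  {ι : Type*} [Fintype ι] [DecidableEq ι]
  (p : ι → Type*) [∀ i, Fintype (p i)] [∀ i, DecidableEq (p i)]

noncomputable def kroneckerPi :
    Matrix n n R ⊗[R] (∀ i, Matrix (p i) (p i) R) ≃ₐ[R] ∀ i, Matrix (n × p i) (n × p i) R :=
  (Algebra.TensorProduct.piRight R R _ _).trans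
    (AlgEquiv.piCongrRight fun i => kroneckerAlgEquiv n (p i) R)

variable {R n p}

@[simp]
theorem kroneckerPi_tmul (Y : Matrix n n R) (c : ∀ i, Matrix (p i) (p i) R) :
    kroneckerPi R n p (Y ⊗ₜ c) = fun i => Y ⊗ₖ c i := rfl

theorem star_kroneckerPi_one_tmul [StarRing R] (c : ∀ i, Matrix (p i) (p i) R) :
    star (kroneckerPi R n p (1 ⊗ₜ c)) = kroneckerPi R n p (1 ⊗ₜ star c) := by
  funext i
  simp [star_eq_conjTranspose, conjTranspose_kronecker]

theorem kroneckerPi_one_tmul_mem_unitary [StarRing R] {u : ∀ i, Matrix (p i) (p i) R}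
    (hu : u ∈ unitary (∀ i, Matrix (p i) (p i) R)) :
    kroneckerPi R n p (1 ⊗ₜ u) ∈ unitary (∀ i, Matrix (n × p i) (n × p i) R) := by
  rw [Unitary.mem_iff] at hu ⊢
  simp only [star_kroneckerPi_one_tmul, ← map_mul, Algebra.TensorProduct.tmul_mul_tmul,
    one_mul, hu.1, hu.2, ← Algebra.TensorProduct.one_def, map_one, and_self]

end KroneckerPi

theorem sum_smul_eq_self_of_biorthogonal {K V ι : Type*} [Field K] [AddCommGroup V]
    [Module K V] [FiniteDimensional K V] [Fintype ι] [DecidableEq ι]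
    (f : ι → Module.Dual K V) (u : ι → V) (hfu : ∀ t t', f t (u t') = if t = t' then 1 else 0)
    (hcard : Fintype.card ι = Module.finrank K V) (x : V) :
    ∑ t, f t x • u t = x := by
  have hli : LinearIndependent K u := by
    refine Fintype.linearIndependent_iff.mpr fun g hg t => ?_
    simpa [hfu] using congrArg (f t) hg
  obtain ⟨g, rfl⟩ := (Submodule.mem_span_range_iff_exists_fun K).mp
    (hli.span_eq_top_of_card_eq_finrank' hcard ▸ Submodule.mem_top (x := x))
  simp [hfu]

theorem Complex.mem_unitary_of_pow_eq_one {z : ℂ} {n : ℕ} (h : z ^ n = 1) (hn : n ≠ 0) :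
    z ∈ unitary ℂ :=
  Unitary.mem_iff_star_mul_self.mpr <| by
    rw [Complex.star_def, Complex.conj_mul', Complex.norm_eq_one_of_pow_eq_one h hn]
    simp

theorem IsPrimitiveRoot.geom_sum_star_pow_mul_pow {ζ : ℂ} {n a b : ℕ} (hζ : IsPrimitiveRoot ζ n)
    (ha : a < n) (hb : b < n) :
    ∑ j ∈ range n, (star (ζ ^ a) * ζ ^ b) ^ j = if a = b then (n : ℂ) else 0 := by
  have hunit : ∀ c : ℕ, star (ζ ^ c) * ζ ^ c = 1 := fun c =>
    Unitary.star_mul_self_of_mem <|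
      pow_mem (Complex.mem_unitary_of_pow_eq_one hζ.pow_eq_one (by omega)) c
  split_ifs with hab
  · simp only [hab, hunit, one_pow, sum_const, card_range, nsmul_eq_mul, mul_one]
  have hne : star (ζ ^ a) * ζ ^ b ≠ 1 := fun h => hab <| hζ.pow_inj ha hb <| by
    rw [← mul_one (ζ ^ a), ← h, ← mul_assoc, mul_comm (ζ ^ a), hunit, one_mul]
  have hpow : (star (ζ ^ a) * ζ ^ b) ^ n = 1 := by
    rw [mul_pow, ← star_pow, ← pow_mul, ← pow_mul, mul_comm a, mul_comm b, pow_mul, pow_mul,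
      hζ.pow_eq_one]
    simp
  rw [geom_sum_eq hne, hpow, sub_self, zero_div]

noncomputable def fourierMatrix (n : ℕ) : Matrix (Fin n) (Fin n) ℂ :=
  of fun a b => Complex.exp (2 * Real.pi * Complex.I / n) ^ ((a : ℕ) * b) / (Real.sqrt n : ℂ)

theorem star_fourierMatrix_mul {n : ℕ} (a b b' : Fin n) :
    star (fourierMatrix n a b) * fourierMatrix n a b'
      = (star (Complex.exp (2 * Real.pi * Complex.I / n) ^ (b : ℕ))
          * Complex.exp (2 * Real.pi * Complex.I / n) ^ (b' : ℕ)) ^ (a : ℕ) / n := by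
  simp only [fourierMatrix, of_apply, star_div₀, star_pow, Complex.star_def, Complex.conj_ofReal]
  rw [div_mul_div_comm, ← Complex.ofReal_mul, Real.mul_self_sqrt (Nat.cast_nonneg n),
    Complex.ofReal_natCast, mul_pow, ← pow_mul, ← pow_mul, mul_comm (b : ℕ), mul_comm (b' : ℕ)]

theorem fourierMatrix_mem_unitary (n : ℕ) :
    fourierMatrix n ∈ unitary (Matrix (Fin n) (Fin n) ℂ) := by
  rw [Matrix.mem_unitaryGroup_iff']
  ext b b'
  have hn : n ≠ 0 := b.pos.ne'
  simp only [mul_apply, star_apply, star_fourierMatrix_mul, ← sum_div]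
  rw [Fin.sum_univ_eq_sum_range (fun a => (_ : ℂ) ^ a),
    (Complex.isPrimitiveRoot_exp n hn).geom_sum_star_pow_mul_pow b.2 b'.2, one_apply]
  simp [Fin.val_inj, apply_ite (· / (n : ℂ)), hn]

theorem star_fourierMatrix_mul_self {n : ℕ} (a b : Fin n) :
    star (fourierMatrix n a b) * fourierMatrix n a b = (n : ℂ)⁻¹ := by
  have hω := Complex.mem_unitary_of_pow_eq_one
    (Complex.isPrimitiveRoot_exp n a.pos.ne').pow_eq_one a.pos.ne'
  rw [star_fourierMatrix_mul, Unitary.star_mul_self_of_mem (pow_mem hω _), one_pow, one_div]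

theorem Matrix.diagonal_mem_unitary {n α : Type*} [Fintype n] [DecidableEq n] [CommSemiring α]
    [StarRing α] {d : n → α} (hd : ∀ a, d a ∈ unitary α) : diagonal d ∈ unitary (Matrix n n α) := by
  rw [Unitary.mem_iff, star_eq_conjTranspose, diagonal_conjTranspose, diagonal_mul_diagonal,
    diagonal_mul_diagonal, ← diagonal_one]
  exact ⟨congrArg diagonal (funext fun a => Unitary.star_mul_self_of_mem (hd a)),
    congrArg diagonal (funext fun a => Unitary.mul_star_self_of_mem (hd a))⟩

section Blocks

variable {s : ℕ} (k : Fin s → ℕ)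

def blockOffset (i : Fin s) : ℕ := ∑ j : Fin i, k (Fin.castLE i.2.le j) ^ 2

theorem sum_blockOffset_eq_sum_range {M : Type*} [AddCommMonoid M] (f : ℕ → M) :
    ∑ i, ∑ a : Fin (k i), ∑ b : Fin (k i), f (blockOffset k i + k i * a + b)
      = ∑ n ∈ range (∑ i, k i ^ 2), f n := by
  rw [← Fin.sum_univ_eq_sum_range, ← finSigmaFinEquiv.sum_comp, Fintype.sum_sigma]
  refine sum_congr rfl fun i _ => ?_
  rw [← (finProdFinEquiv.trans (finCongr (sq (k i)).symm)).sum_comp, Fintype.sum_prod_type]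
  refine sum_congr rfl fun a _ => sum_congr rfl fun b _ => ?_
  rw [finSigmaFinEquiv_apply]
  simp only [blockOffset, finProdFinEquiv, Equiv.trans_apply, Equiv.coe_fn_mk, finCongr_apply_mk]
  ring_nf

noncomputable def twistedFourier (z : ℂ) (i : Fin s) : Matrix (Fin (k i)) (Fin (k i)) ℂ :=
  diagonal (fun a : Fin (k i) => z ^ (blockOffset k i + k i * a)) * fourierMatrix (k i)
    * diagonal (fun b : Fin (k i) => z ^ (b : ℕ))

noncomputable def traceVectorState : (∀ i, Matrix (Fin (k i)) (Fin (k i)) ℂ) →ₗ[ℂ] ℂ where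
  toFun c := (∑ i, (k i : ℂ) * trace (c i)) / (∑ i, k i ^ 2 : ℕ)
  map_add' c c' := by simp only [Pi.add_apply, trace_add, mul_add, sum_add_distrib, add_div]
  map_smul' r c := by
    simp only [Pi.smul_apply, trace_smul, smul_eq_mul, mul_left_comm _ r, ← mul_sum,
      RingHom.id_apply, mul_div_assoc]

variable {k}

theorem twistedFourier_apply (z : ℂ) (i : Fin s) (a b : Fin (k i)) :
    twistedFourier k z i a b
      = z ^ (blockOffset k i + k i * a) * fourierMatrix (k i) a b * z ^ (b : ℕ) := by
  rw [twistedFourier, mul_diagonal, diagonal_mul]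

theorem twistedFourier_mem_unitary {z : ℂ} (hz : z ∈ unitary ℂ) :
    twistedFourier k z ∈ unitary (∀ i, Matrix (Fin (k i)) (Fin (k i)) ℂ) := by
  have hblock : ∀ i, twistedFourier k z i ∈ unitary (Matrix (Fin (k i)) (Fin (k i)) ℂ) :=
    fun i => mul_mem (mul_mem (diagonal_mem_unitary fun _ => pow_mem hz _)
      (fourierMatrix_mem_unitary _)) (diagonal_mem_unitary fun _ => pow_mem hz _)
  rw [Unitary.mem_iff]
  exact ⟨funext fun i => Unitary.star_mul_self_of_mem (hblock i),
    funext fun i => Unitary.mul_star_self_of_mem (hblock i)⟩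

theorem sum_mul_trace_star_twistedFourier_mul (z z' : ℂ) :
    ∑ i, (k i : ℂ) * trace (star (twistedFourier k z i) * twistedFourier k z' i)
      = ∑ n ∈ range (∑ i, k i ^ 2), (star z * z') ^ n := by
  rw [← sum_blockOffset_eq_sum_range]
  refine sum_congr rfl fun i _ => ?_
  simp only [trace, diag_apply, mul_apply, star_apply, twistedFourier_apply, mul_sum]
  rw [sum_comm]
  refine sum_congr rfl fun a _ => sum_congr rfl fun b _ => ?_
  have hk : (k i : ℂ) ≠ 0 := Nat.cast_ne_zero.mpr a.pos.ne'
  calc (k i : ℂ) * (star (z ^ (blockOffset k i + k i * a) * fourierMatrix (k i) a b * z ^ (b : ℕ))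
        * (z' ^ (blockOffset k i + k i * a) * fourierMatrix (k i) a b * z' ^ (b : ℕ)))
      = (k i : ℂ) * (star (fourierMatrix (k i) a b) * fourierMatrix (k i) a b)
        * ((star z * z') ^ (blockOffset k i + k i * a) * (star z * z') ^ (b : ℕ)) := by
        simp only [star_mul', star_pow, mul_pow]; ring
    _ = (star z * z') ^ (blockOffset k i + k i * a + b) := by
        rw [star_fourierMatrix_mul_self, mul_inv_cancel₀ hk, one_mul, ← pow_add]

theorem traceVectorState_apply (c : ∀ i, Matrix (Fin (k i)) (Fin (k i)) ℂ) :
    traceVectorState k c = (∑ i, (k i : ℂ) * trace (c i)) / (∑ i, k i ^ 2 : ℕ) := rfl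

theorem traceVectorState_one (hK : 0 < ∑ i, k i ^ 2) : traceVectorState k 1 = 1 := by
  rw [traceVectorState_apply, div_eq_one_iff_eq (by exact_mod_cast hK.ne')]
  simp [sq]

theorem finrank_pi_matrix :
    Module.finrank ℂ (∀ i, Matrix (Fin (k i)) (Fin (k i)) ℂ) = ∑ i, k i ^ 2 := by
  simp [Module.finrank_pi_fintype, Module.finrank_matrix, sq]

theorem exists_unitary_orthonormal_traceVectorState :
    ∃ u : Fin (∑ i, k i ^ 2) → ∀ i, Matrix (Fin (k i)) (Fin (k i)) ℂ,
      (∀ t, u t ∈ unitary (∀ i, Matrix (Fin (k i)) (Fin (k i)) ℂ)) ∧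
      ∀ t t', traceVectorState k (star (u t) * u t') = if t = t' then 1 else 0 := by
  set K := ∑ i, k i ^ 2
  let ζ := Complex.exp (2 * Real.pi * Complex.I / K)
  refine ⟨fun t => twistedFourier k (ζ ^ (t : ℕ)), fun t => ?_, fun t t' => ?_⟩
  · have hK : K ≠ 0 := t.pos.ne'
    exact twistedFourier_mem_unitary <|
      pow_mem (Complex.mem_unitary_of_pow_eq_one (Complex.isPrimitiveRoot_exp K hK).pow_eq_one hK) _
  · have hK : K ≠ 0 := t.pos.ne'
    rw [traceVectorState_apply]
    simp only [Pi.mul_apply, Pi.star_apply]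
    rw [sum_mul_trace_star_twistedFourier_mul,
      (Complex.isPrimitiveRoot_exp K hK).geom_sum_star_pow_mul_pow t.2 t'.2]
    simp only [Fin.val_inj]
    split_ifs
    exacts [div_self (Nat.cast_ne_zero.mpr hK), zero_div _]

end Blocks

section Expectation

variable {s m : ℕ} {k : Fin s → ℕ}

local notation "κ" => kroneckerPi ℂ (Fin m) (fun i => Fin (k i))

theorem fullIncl_eq_kroneckerPi (Y : Matrix (Fin m) (Fin m) ℂ) :
    fullIncl s m k Y = κ (Y ⊗ₜ 1) := by
  funext i
  ext p q
  simp [fullIncl, one_apply]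

theorem markovTrace_kroneckerPi_tmul (Y : Matrix (Fin m) (Fin m) ℂ)
    (c : ∀ i, Matrix (Fin (k i)) (Fin (k i)) ℂ) :
    markovTrace s m k (κ (Y ⊗ₜ c)) = trace Y / m * traceVectorState k c := by
  rcases eq_or_ne (m : ℂ) 0 with hm | hm
  · simp [markovTrace, hm]
  simp only [markovTrace, kroneckerPi_tmul, trace_kronecker, traceVectorState_apply]
  push_cast
  have hnum : ∑ i, (m : ℂ) * k i * (trace Y * trace (c i))
      = m * trace Y * ∑ i, (k i : ℂ) * trace (c i) := by
    rw [mul_sum]; exact sum_congr rfl fun i _ => by ring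
  have hden : ∑ i, ((m : ℂ) * k i) ^ 2 = m * (m * ∑ i, (k i : ℂ) ^ 2) := by
    rw [mul_sum, mul_sum]; exact sum_congr rfl fun i _ => by ring
  rw [hnum, hden, mul_assoc, mul_div_mul_left _ _ hm, div_mul_div_comm]

variable {E : (∀ i, Matrix (Fin m × Fin (k i)) (Fin m × Fin (k i)) ℂ) →ₗ[ℂ]
  Matrix (Fin m) (Fin m) ℂ}

theorem expectation_kroneckerPi_tmul (hm : 0 < m) (hK : 0 < ∑ i, k i ^ 2)
    (hEbim : ∀ Y Z X, E (fullIncl s m k Y * X * fullIncl s m k Z) = Y * E X * Z)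
    (hEtr : ∀ X, markovTrace s m k (fullIncl s m k (E X)) = markovTrace s m k X)
    (Y : Matrix (Fin m) (Fin m) ℂ) (c : ∀ i, Matrix (Fin (k i)) (Fin (k i)) ℂ) :
    E (κ (Y ⊗ₜ c)) = traceVectorState k c • Y := by
  have hincl_one : fullIncl s m k 1 = 1 := by
    rw [fullIncl_eq_kroneckerPi, ← Algebra.TensorProduct.one_def, map_one]
  have hleft : ∀ Y X, E (fullIncl s m k Y * X) = Y * E X := fun Y X => by
    simpa [hincl_one] using hEbim Y 1 X
  have hright : ∀ Y X, E (X * fullIncl s m k Y) = E X * Y := fun Y X => by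
    simpa [hincl_one] using hEbim 1 Y X
  set X := κ (1 ⊗ₜ c)
  have hsplit : ∀ Y, κ (Y ⊗ₜ c) = fullIncl s m k Y * X := fun Y => by
    rw [fullIncl_eq_kroneckerPi, ← map_mul, Algebra.TensorProduct.tmul_mul_tmul, mul_one, one_mul]
  have hcomm : ∀ Y, Commute Y (E X) := fun Y => by
    rw [Commute, SemiconjBy, ← hleft, ← hright, fullIncl_eq_kroneckerPi, ← map_mul, ← map_mul,
      Algebra.TensorProduct.tmul_mul_tmul, Algebra.TensorProduct.tmul_mul_tmul, mul_one, one_mul,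
      mul_one, one_mul]
  obtain ⟨r, hr⟩ := mem_range_scalar_of_commute_single fun _ _ _ => hcomm _
  have hr_eq : r = traceVectorState k c := by
    have hm' : (m : ℂ) ≠ 0 := Nat.cast_ne_zero.mpr hm.ne'
    have h := hEtr X
    rw [← hr, fullIncl_eq_kroneckerPi, markovTrace_kroneckerPi_tmul,
      markovTrace_kroneckerPi_tmul, traceVectorState_one hK] at h
    simpa [hm'] using h
  rw [hsplit, hleft, ← hr, hr_eq, scalar_apply, smul_eq_mul_diagonal]

theorem sum_mul_fullIncl_expectation_eq_self {ι : Type*} [Fintype ι] [DecidableEq ι]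
    (hE : ∀ Y c, E (κ (Y ⊗ₜ c)) = traceVectorState k c • Y)
    (u : ι → ∀ i, Matrix (Fin (k i)) (Fin (k i)) ℂ)
    (horth : ∀ t t', traceVectorState k (star (u t) * u t') = if t = t' then 1 else 0)
    (hcard : Fintype.card ι = ∑ i, k i ^ 2)
    (X : ∀ i, Matrix (Fin m × Fin (k i)) (Fin m × Fin (k i)) ℂ) :
    ∑ t, κ (1 ⊗ₜ u t) * fullIncl s m k (E (star (κ (1 ⊗ₜ u t)) * X)) = X := by
  obtain ⟨z, rfl⟩ := (κ).surjective X
  induction z using TensorProduct.induction_on with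
  | zero => simp [fullIncl_eq_kroneckerPi]
  | tmul Y c =>
    have hc := sum_smul_eq_self_of_biorthogonal (fun t => traceVectorState k ∘ₗ
      LinearMap.mulLeft ℂ (star (u t))) u horth (hcard.trans finrank_pi_matrix.symm) c
    have hterm : ∀ t, κ (1 ⊗ₜ u t) * fullIncl s m k (E (star (κ (1 ⊗ₜ u t)) * κ (Y ⊗ₜ c)))
        = κ (Y ⊗ₜ (traceVectorState k (star (u t) * c) • u t)) := fun t => by
      rw [star_kroneckerPi_one_tmul, ← map_mul, Algebra.TensorProduct.tmul_mul_tmul, one_mul, hE,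
        fullIncl_eq_kroneckerPi, ← map_mul, Algebra.TensorProduct.tmul_mul_tmul, one_mul, mul_one,
        TensorProduct.smul_tmul]
    rw [sum_congr rfl fun t _ => hterm t, ← map_sum, ← TensorProduct.tmul_sum]
    exact congrArg _ (congrArg _ hc)
  | add x y hx hy =>
    simp only [map_add, mul_add, fullIncl_eq_kroneckerPi, TensorProduct.add_tmul, sum_add_distrib]
      at hx hy ⊢
    rw [hx, hy]

end Expectation

theorem full_matrix_subalgebra_U_property_general
    (s m : ℕ) (hs : 0 < s) (hm : 0 < m) (k : Fin s → ℕ) (hk : ∀ i, 0 < k i)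
    (E : (∀ i, Matrix (Fin m × Fin (k i)) (Fin m × Fin (k i)) ℂ) →ₗ[ℂ]
          Matrix (Fin m) (Fin m) ℂ)
    -- E is a conditional expectation onto M_m
    (hEbim : ∀ Y Z X, E (fullIncl s m k Y * X * fullIncl s m k Z) = Y * E X * Z)
    -- E preserves the Markov trace
    (hEtr : ∀ X, markovTrace s m k (fullIncl s m k (E X)) = markovTrace s m k X) :
    (∃ Φ : (∀ i, Matrix (Fin m × Fin (k i)) (Fin m × Fin (k i)) ℂ) ≃ₐ[ℂ]
        (Matrix (Fin m) (Fin m) ℂ) ⊗[ℂ] (∀ i, Matrix (Fin (k i)) (Fin (k i)) ℂ),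
      ∀ Y : Matrix (Fin m) (Fin m) ℂ, Φ (fullIncl s m k Y) = Y ⊗ₜ[ℂ] 1) ∧
    (∃ W : Fin (∑ i, (k i) ^ 2) →
        (∀ i, Matrix (Fin m × Fin (k i)) (Fin m × Fin (k i)) ℂ),
      (∀ t, W t ∈ unitary (∀ i, Matrix (Fin m × Fin (k i)) (Fin m × Fin (k i)) ℂ)) ∧
      (∀ t t', E (star (W t) * W t') = if t = t' then 1 else 0) ∧
      (∀ X, X = ∑ t, W t * fullIncl s m k (E (star (W t) * X)))) := by
  have hK : 0 < ∑ i, k i ^ 2 := sum_pos (fun i _ => pow_pos (hk i) 2) ⟨⟨0, hs⟩, mem_univ _⟩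
  have hE := expectation_kroneckerPi_tmul hm hK hEbim hEtr
  obtain ⟨u, hu, horth⟩ := exists_unitary_orthonormal_traceVectorState (k := k)
  refine ⟨⟨(kroneckerPi ℂ (Fin m) fun i => Fin (k i)).symm, fun Y => ?_⟩,
    fun t => kroneckerPi ℂ (Fin m) (fun i => Fin (k i)) (1 ⊗ₜ u t),
    fun t => kroneckerPi_one_tmul_mem_unitary (hu t), fun t t' => ?_,
    fun X => (sum_mul_fullIncl_expectation_eq_self hE u horth (Fintype.card_fin _) X).symm⟩
  · rw [fullIncl_eq_kroneckerPi, AlgEquiv.symm_apply_apply]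
  · rw [star_kroneckerPi_one_tmul, ← map_mul, Algebra.TensorProduct.tmul_mul_tmul, one_mul, hE,
      horth, ite_smul, one_smul, zero_smul]

/-- If ℬ = M_m ⊆ 𝒜 = ⊕ᵢ M_{nᵢ} with nᵢ = m·kᵢ, then the inclusion is
isomorphic to the tensor product of the trivial inclusion M_m ⊆ M_m with
ℂ ⊆ ⊕ᵢ M_{kᵢ}; consequently, if E preserves the Markov trace, (M_m ⊆ 𝒜, E)
admits a unitary orthonormal basis of cardinality ∑ᵢ kᵢ². -/
theorem full_matrix_subalgebra_U_property
    (s m : ℕ) (hs : 0 < s) (hm : 0 < m) (k : Fin s → ℕ) (hk : ∀ i, 0 < k i)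
    (E : (∀ i, Matrix (Fin m × Fin (k i)) (Fin m × Fin (k i)) ℂ) →ₗ[ℂ]
          Matrix (Fin m) (Fin m) ℂ)
    -- E is a conditional expectation onto M_m
    (hEfix : ∀ Y, E (fullIncl s m k Y) = Y)
    (hEbim : ∀ Y Z X, E (fullIncl s m k Y * X * fullIncl s m k Z) = Y * E X * Z)
    -- E preserves the Markov trace
    (hEtr : ∀ X, markovTrace s m k (fullIncl s m k (E X)) = markovTrace s m k X) :
    (∃ Φ : (∀ i, Matrix (Fin m × Fin (k i)) (Fin m × Fin (k i)) ℂ) ≃ₐ[ℂ]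
        (Matrix (Fin m) (Fin m) ℂ) ⊗[ℂ] (∀ i, Matrix (Fin (k i)) (Fin (k i)) ℂ),
      ∀ Y : Matrix (Fin m) (Fin m) ℂ, Φ (fullIncl s m k Y) = Y ⊗ₜ[ℂ] 1) ∧
    (∃ W : Fin (∑ i, (k i) ^ 2) →
        (∀ i, Matrix (Fin m × Fin (k i)) (Fin m × Fin (k i)) ℂ),
      (∀ t, W t ∈ unitary (∀ i, Matrix (Fin m × Fin (k i)) (Fin m × Fin (k i)) ℂ)) ∧
      (∀ t t', E (star (W t) * W t') = if t = t' then 1 else 0) ∧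
      (∀ X, X = ∑ t, W t * fullIncl s m k (E (star (W t) * X)))) :=
  full_matrix_subalgebra_U_property_general s m hs hm k hk E hEbim hEtr
end

section
/- Suppose (ℬ ⊆ 𝒜, E) has a unitary orthonormal basis {U₀,…,U_{d-1}}, 𝒜₁ is the Jones basic construction with Jones projection J, and E₁ : 𝒜₁ → 𝒜 is the dual conditional expectation. Then the elements W_j = Σ_{k=0}^{d-1} e^{2πi jk/d} U_k J U_k* for 0 ≤ j ≤ d-1 form a unitary orthonormal basis for (𝒜 ⊆ 𝒜₁, E₁). In particular Σ_k U_k J U_k* = 1 and each W_j is unitary. -/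
/-!
The projections `P_k = U_k J U_k*` satisfy `P_k P_l = U_k E(U_k* U_l) J U_l* = δ_kl P_k`, and
`∑ P_k` acts as the identity on the spanning set `𝒜 J 𝒜` by the basis expansion in `𝒜`, so they
form a complete family of orthogonal self-adjoint idempotents. Each `W_j` is a combination of the
`P_k` with coefficients `ζ^{jk}` of modulus one, hence unitary. As `E₁(P_k) = d⁻¹`,
orthonormality of the `W_j` is the orthogonality of the characters of `ℤ/d`, and the dual
orthogonality relation reduces the basis expansion to `d ∑_k P_k E₁(P_k x) = x`. The latter holds
because `P_k E₁(P_k x) = d⁻¹ P_k x`, which is checked on generators `x = aJb` using that `J`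
commutes with `ℬ`.
-/

open Finset

theorem IsPrimitiveRoot.sum_inv_pow_mul_pow {K : Type*} [Field K] {ζ : K} {d : ℕ}
    (hζ : IsPrimitiveRoot ζ d) (j j' : Fin d) :
    ∑ t : Fin d, (ζ ^ ((j : ℕ) * t))⁻¹ * ζ ^ ((j' : ℕ) * t) = if j = j' then (d : K) else 0 := by
  have hζ0 : ζ ≠ 0 := hζ.ne_zero (Fin.pos j).ne'
  set z := (ζ ^ (j : ℕ))⁻¹ * ζ ^ (j' : ℕ)
  have hterm : ∀ t : ℕ, (ζ ^ ((j : ℕ) * t))⁻¹ * ζ ^ ((j' : ℕ) * t) = z ^ t := by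
    intro t; simp only [z, mul_pow, inv_pow, pow_mul]
  simp only [hterm, Fin.sum_univ_eq_sum_range (z ^ ·)]
  split_ifs with hjj
  · simp [z, hjj, hζ0]
  · have hz : z ≠ 1 := by
      rw [Ne, inv_mul_eq_one₀ (pow_ne_zero _ hζ0)]
      exact fun h => hjj (Fin.ext (hζ.pow_inj j.isLt j'.isLt h))
    have hzd : z ^ d = 1 := by
      rw [← hterm, pow_mul', pow_mul' ζ (j' : ℕ), hζ.pow_eq_one, one_pow, one_pow, inv_one, one_mul]
    rw [geom_sum_eq hz, hzd, sub_self, zero_div]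

theorem IsPrimitiveRoot.star_pow_eq_inv {ζ : ℂ} {d : ℕ} (hζ : IsPrimitiveRoot ζ d) (hd : d ≠ 0)
    (n : ℕ) : star (ζ ^ n) = (ζ ^ n)⁻¹ :=
  (Complex.inv_eq_conj (by rw [norm_pow, hζ.norm'_eq_one hd, one_pow])).symm

theorem IsPrimitiveRoot.sum_star_pow_mul_pow {ζ : ℂ} {d : ℕ} (hζ : IsPrimitiveRoot ζ d)
    (j j' : Fin d) :
    ∑ t : Fin d, star (ζ ^ ((j : ℕ) * t)) * ζ ^ ((j' : ℕ) * t) = if j = j' then (d : ℂ) else 0 := by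
  simpa only [hζ.star_pow_eq_inv (Fin.pos j).ne'] using hζ.sum_inv_pow_mul_pow j j'

theorem IsPrimitiveRoot.sum_pow_mul_star_pow {ζ : ℂ} {d : ℕ} (hζ : IsPrimitiveRoot ζ d)
    (t t' : Fin d) :
    ∑ j : Fin d, ζ ^ ((j : ℕ) * t) * star (ζ ^ ((j : ℕ) * t')) = if t = t' then (d : ℂ) else 0 := by
  convert hζ.sum_star_pow_mul_pow t' t using 1
  · exact sum_congr rfl fun j _ => by rw [mul_comm, mul_comm (j : ℕ), mul_comm (j : ℕ)]
  · exact if_congr eq_comm rfl rfl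

theorem Complex.exp_two_pi_I_mul_div_eq_pow (d j t : ℕ) :
    Complex.exp (2 * Real.pi * Complex.I * ((j : ℂ) * t / d)) =
      Complex.exp (2 * Real.pi * Complex.I / d) ^ (j * t) := by
  rw [← Complex.exp_nat_mul]; push_cast; ring_nf

section Idempotents

variable {R A ι : Type*} [CommSemiring R] [Semiring A] [Algebra R A] [Fintype ι] {P : ι → A}

theorem OrthogonalIdempotents.sum_smul_mul_sum_smul (hP : OrthogonalIdempotents P)
    (a b : ι → R) : (∑ i, a i • P i) * (∑ i, b i • P i) = ∑ i, (a i * b i) • P i := by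
  classical
  simp_rw [sum_mul, mul_sum, smul_mul_smul_comm, hP.mul_eq, smul_ite, smul_zero,
    sum_ite_eq, mem_univ, if_true]

variable [StarRing R] [StarRing A] [StarModule R A]

theorem star_sum_smul_of_isSelfAdjoint (hPs : ∀ i, IsSelfAdjoint (P i)) (c : ι → R) :
    star (∑ i, c i • P i) = ∑ i, star (c i) • P i := by
  simp_rw [star_sum, star_smul, (hPs _).star_eq]

theorem OrthogonalIdempotents.map_star_sum_smul_mul_sum_smul {M : Type*} [AddCommMonoid M]
    [Module R M] (hP : OrthogonalIdempotents P) (hPs : ∀ i, IsSelfAdjoint (P i))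
    (Φ : A →ₗ[R] M) {m : M} (hΦ : ∀ i, Φ (P i) = m) (a b : ι → R) :
    Φ (star (∑ i, a i • P i) * ∑ i, b i • P i) = (∑ i, star (a i) * b i) • m := by
  simp_rw [star_sum_smul_of_isSelfAdjoint hPs, hP.sum_smul_mul_sum_smul, map_sum, map_smul, hΦ,
    sum_smul]

theorem sum_smul_mul_map_star_sum_smul_mul {κ : Type*} [Fintype κ] [DecidableEq ι]
    (hPs : ∀ i, IsSelfAdjoint (P i)) (Φ : A →ₗ[R] A) (c : κ → ι → R) {n : R}
    (hc : ∀ i i', ∑ k, c k i * star (c k i') = if i = i' then n else 0) (x : A) :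
    ∑ k, (∑ i, c k i • P i) * Φ (star (∑ i, c k i • P i) * x) =
      n • ∑ i, P i * Φ (P i * x) := by
  simp_rw [star_sum_smul_of_isSelfAdjoint hPs, sum_mul, smul_mul_assoc, map_sum, map_smul,
    mul_sum, mul_smul_comm, smul_sum, smul_smul]
  rw [sum_comm]
  refine sum_congr rfl fun i _ => ?_
  rw [sum_comm]
  simp_rw [← sum_smul, hc, ite_smul, zero_smul, sum_ite_eq, mem_univ, if_true]

theorem CompleteOrthogonalIdempotents.sum_smul_mem_unitary
    (hP : CompleteOrthogonalIdempotents P) (hPs : ∀ i, IsSelfAdjoint (P i))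
    (c : ι → R) (hc : ∀ i, star (c i) * c i = 1) : ∑ i, c i • P i ∈ unitary A := by
  rw [Unitary.mem_iff, star_sum_smul_of_isSelfAdjoint hPs, hP.sum_smul_mul_sum_smul,
    hP.sum_smul_mul_sum_smul]
  simp_rw [hc, mul_comm (c _), hc, one_smul, hP.complete, and_self]

end Idempotents

section Jones

variable {R A : Type*} [CommSemiring R] [StarRing R] [Semiring A] [StarRing A] [Algebra R A]
  [StarModule R A] {SA SB : StarSubalgebra R A} {E : A →ₗ[R] A} {J : A}

theorem commute_jones_of_mem (hBA : SB ≤ SA) (hEfix : ∀ y ∈ SB, E y = y) (hJstar : star J = J)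
    (hJE : ∀ x ∈ SA, J * x * J = E x * J) {b : A} (hb : b ∈ SB) : Commute J b := by
  have hright : J * b * J = b * J := by rw [hJE b (hBA hb), hEfix b hb]
  have hleft : J * b * J = J * b := by
    simpa only [hEfix _ (star_mem hb), star_mul, star_star, hJstar, mul_assoc] using
      congrArg star (hJE (star b) (hBA (star_mem hb)))
  exact hleft.symm.trans hright

theorem conj_jones_mul_mul_jones_mul (hJE : ∀ x ∈ SA, J * x * J = E x * J) {u x : A}
    (hux : star u * x ∈ SA) (y : A) :
    u * J * star u * (x * J * y) = u * E (star u * x) * J * y :=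
  calc _ = u * (J * (star u * x) * J) * y := by simp only [mul_assoc]
    _ = _ := by rw [hJE _ hux]; simp only [mul_assoc]

theorem sum_conj_jones_eq_one {ι : Type*} [Fintype ι] (hJE : ∀ x ∈ SA, J * x * J = E x * J)
    (hspan : Submodule.span R {w : A | ∃ x ∈ SA, ∃ y ∈ SA, w = x * J * y} = ⊤)
    {U : ι → A} (hUmem : ∀ t, U t ∈ SA) (hUbasis : ∀ x ∈ SA, x = ∑ t, U t * E (star (U t) * x)) :
    ∑ t, U t * J * star (U t) = 1 := by
  have hmul : LinearMap.mulLeft R (∑ t, U t * J * star (U t)) = LinearMap.id := by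
    refine LinearMap.ext_on hspan ?_
    rintro _ ⟨x, hx, y, hy, rfl⟩
    simp only [LinearMap.mulLeft_apply, LinearMap.id_apply, sum_mul,
      conj_jones_mul_mul_jones_mul hJE (mul_mem (star_mem (hUmem _)) hx)]
    rw [← sum_mul, ← sum_mul, ← hUbasis x hx]
  simpa using LinearMap.congr_fun hmul 1

theorem conj_jones_mul_conj_jones {ι : Type*} [DecidableEq ι]
    (hJE : ∀ x ∈ SA, J * x * J = E x * J) {U : ι → A} (hUmem : ∀ t, U t ∈ SA)
    (hUorth : ∀ t t', E (star (U t) * U t') = if t = t' then 1 else 0) (t t' : ι) :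
    U t * J * star (U t) * (U t' * J * star (U t')) =
      if t = t' then U t * J * star (U t) else 0 := by
  rw [conj_jones_mul_mul_jones_mul hJE
    (mul_mem (star_mem (hUmem t)) (hUmem t')), hUorth]
  split_ifs with h
  · simp [h]
  · simp

theorem completeOrthogonalIdempotents_conj_jones {ι : Type*} [Fintype ι] [DecidableEq ι]
    (hJE : ∀ x ∈ SA, J * x * J = E x * J)
    (hspan : Submodule.span R {w : A | ∃ x ∈ SA, ∃ y ∈ SA, w = x * J * y} = ⊤)
    {U : ι → A} (hUmem : ∀ t, U t ∈ SA)
    (hUorth : ∀ t t', E (star (U t) * U t') = if t = t' then 1 else 0)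
    (hUbasis : ∀ x ∈ SA, x = ∑ t, U t * E (star (U t) * x)) :
    CompleteOrthogonalIdempotents fun t => U t * J * star (U t) :=
  CompleteOrthogonalIdempotents.iff_ortho_complete.mpr
    ⟨fun t t' h => by simpa [h] using conj_jones_mul_conj_jones hJE hUmem hUorth t t',
      sum_conj_jones_eq_one hJE hspan hUmem hUbasis⟩

theorem conj_jones_mul_map_conj_jones_mul (hBA : SB ≤ SA) (hEmem : ∀ x ∈ SA, E x ∈ SB)
    (hEfix : ∀ y ∈ SB, E y = y) (hJstar : star J = J) (hJE : ∀ x ∈ SA, J * x * J = E x * J)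
    (hspan : Submodule.span R {w : A | ∃ x ∈ SA, ∃ y ∈ SA, w = x * J * y} = ⊤)
    {E₁ : A →ₗ[R] A} {κ : R} (hE₁J : ∀ x ∈ SA, ∀ y ∈ SA, E₁ (x * J * y) = κ • (x * y))
    {u : A} (hu : u ∈ SA) (hunit : star u * u = 1) (z : A) :
    u * J * star u * E₁ (u * J * star u * z) = κ • (u * J * star u * z) := by
  have hmap : LinearMap.mulLeft R (u * J * star u) ∘ₗ E₁ ∘ₗ LinearMap.mulLeft R (u * J * star u) =
      κ • LinearMap.mulLeft R (u * J * star u) := by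
    refine LinearMap.ext_on hspan ?_
    rintro _ ⟨x, hx, y, hy, rfl⟩
    have hux : star u * x ∈ SA := mul_mem (star_mem hu) hx
    have hb : E (star u * x) ∈ SB := hEmem _ hux
    simp only [LinearMap.comp_apply, LinearMap.mulLeft_apply, LinearMap.smul_apply,
      conj_jones_mul_mul_jones_mul hJE hux,
      hE₁J _ (mul_mem hu (hBA hb)) y hy, mul_smul_comm]
    congr 1
    calc u * J * star u * (u * E (star u * x) * y) = u * (J * E (star u * x)) * y := by
          simp only [mul_assoc, ← mul_assoc (star u) u, hunit, one_mul]
      _ = u * E (star u * x) * J * y := by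
          rw [(commute_jones_of_mem hBA hEfix hJstar hJE hb).eq]; simp only [mul_assoc]
  exact LinearMap.congr_fun hmap z

end Jones

theorem basic_construction_unitary_onb_general
    {A₁ : Type*} [Ring A₁] [StarRing A₁] [Algebra ℂ A₁] [StarModule ℂ A₁]
    (SA SB : StarSubalgebra ℂ A₁) (hBA : SB ≤ SA)
    (d : ℕ) (hd : 0 < d)
    (E E₁ : A₁ →ₗ[ℂ] A₁)
    -- E is a conditional expectation of 𝒜 onto ℬ
    (hEmem : ∀ x ∈ SA, E x ∈ SB) (hEfix : ∀ y ∈ SB, E y = y)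
    -- J is the Jones projection: J* = J = J², J x J = E(x) J for x ∈ 𝒜,
    -- and 𝒜₁ = span 𝒜 J 𝒜
    (J : A₁) (hJstar : star J = J)
    (hJE : ∀ x ∈ SA, J * x * J = E x * J)
    (hspan : ∀ z : A₁,
      z ∈ Submodule.span ℂ {w : A₁ | ∃ x ∈ SA, ∃ y ∈ SA, w = x * J * y})
    -- E₁ is the dual conditional expectation of 𝒜₁ onto 𝒜, E₁(xJy) = d⁻¹ xy
    (hE₁J : ∀ x ∈ SA, ∀ y ∈ SA, E₁ (x * J * y) = ((d : ℂ)⁻¹) • (x * y))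
    -- {U_k} is a unitary orthonormal basis for (ℬ ⊆ 𝒜, E)
    (U : Fin d → A₁) (hUmem : ∀ t, U t ∈ SA)
    (hUu : ∀ t, U t ∈ unitary A₁)
    (hUorth : ∀ t t', E (star (U t) * U t') = if t = t' then 1 else 0)
    (hUbasis : ∀ x ∈ SA, x = ∑ t, U t * E (star (U t) * x)) :
    ∀ W : Fin d → A₁,
      (∀ j, W j = ∑ t : Fin d, Complex.exp (2 * Real.pi * Complex.I *
          ((j : ℕ) * (t : ℕ) / (d : ℂ))) • (U t * J * star (U t))) →
      (∑ t, U t * J * star (U t) = 1) ∧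
      (∀ j, W j ∈ unitary A₁) ∧
      (∀ j j', E₁ (star (W j) * W j') = if j = j' then 1 else 0) ∧
      (∀ x : A₁, x = ∑ j, W j * E₁ (star (W j) * x)) := by
  intro W hW
  have hd0 : d ≠ 0 := hd.ne'
  set ζ := Complex.exp (2 * Real.pi * Complex.I / d)
  have hζ : IsPrimitiveRoot ζ d := Complex.isPrimitiveRoot_exp d hd0
  have hWζ : ∀ j, W j = ∑ t : Fin d, ζ ^ ((j : ℕ) * t) • (U t * J * star (U t)) := by
    simpa only [Complex.exp_two_pi_I_mul_div_eq_pow] using hW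
  have hspan' := Submodule.eq_top_iff'.mpr hspan
  have hP := completeOrthogonalIdempotents_conj_jones hJE hspan' hUmem hUorth hUbasis
  have hPs : ∀ t, IsSelfAdjoint (U t * J * star (U t)) := fun t =>
    IsSelfAdjoint.conjugate hJstar (U t)
  have hE₁P : ∀ t, E₁ (U t * J * star (U t)) = (d : ℂ)⁻¹ • 1 := fun t => by
    rw [hE₁J _ (hUmem t) _ (star_mem (hUmem t)), (Unitary.mem_iff.mp (hUu t)).2]
  refine ⟨hP.complete, fun j => hWζ j ▸ hP.sum_smul_mem_unitary hPs _ fun t => ?_,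
    fun j j' => ?_, fun x => ?_⟩
  · rw [hζ.star_pow_eq_inv hd0, inv_mul_cancel₀ (pow_ne_zero _ (hζ.ne_zero hd0))]
  · rw [hWζ, hWζ, hP.map_star_sum_smul_mul_sum_smul hPs E₁ hE₁P, hζ.sum_star_pow_mul_pow]
    split_ifs <;> simp [hd0]
  · simp_rw [hWζ]
    rw [sum_smul_mul_map_star_sum_smul_mul hPs E₁ _ hζ.sum_pow_mul_star_pow]
    simp_rw [conj_jones_mul_map_conj_jones_mul hBA hEmem hEfix hJstar hJE hspan' hE₁J (hUmem _)
      (Unitary.mem_iff.mp (hUu _)).1, ← smul_sum, ← sum_mul, hP.complete, one_mul, smul_smul]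
    rw [mul_inv_cancel₀ (Nat.cast_ne_zero.mpr hd0), one_smul]

/-- Basic construction: if (ℬ ⊆ 𝒜, E) has a unitary orthonormal basis
{U₀,…,U_{d-1}}, 𝒜₁ is the Jones basic construction with Jones projection J and
dual conditional expectation E₁, then the elements
W_j = ∑_k e^{2πi jk/d} U_k J U_k* form a unitary orthonormal basis for
(𝒜 ⊆ 𝒜₁, E₁); in particular ∑_k U_k J U_k* = 1 and each W_j is unitary. -/
theorem basic_construction_unitary_onb
    {A₁ : Type*} [Ring A₁] [StarRing A₁] [Algebra ℂ A₁] [StarModule ℂ A₁]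
    (SA SB : StarSubalgebra ℂ A₁) (hBA : SB ≤ SA)
    (d : ℕ) (hd : 0 < d)
    (E E₁ : A₁ →ₗ[ℂ] A₁)
    -- E is a conditional expectation of 𝒜 onto ℬ
    (hEmem : ∀ x ∈ SA, E x ∈ SB) (hEfix : ∀ y ∈ SB, E y = y)
    (hEbim : ∀ y z, y ∈ SB → z ∈ SB → ∀ x, E (y * x * z) = y * E x * z)
    -- J is the Jones projection: J* = J = J², J x J = E(x) J for x ∈ 𝒜,
    -- and 𝒜₁ = span 𝒜 J 𝒜
    (J : A₁) (hJstar : star J = J) (hJidem : J * J = J)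
    (hJE : ∀ x ∈ SA, J * x * J = E x * J)
    (hspan : ∀ z : A₁,
      z ∈ Submodule.span ℂ {w : A₁ | ∃ x ∈ SA, ∃ y ∈ SA, w = x * J * y})
    -- E₁ is the dual conditional expectation of 𝒜₁ onto 𝒜, E₁(xJy) = d⁻¹ xy
    (hE₁mem : ∀ x, E₁ x ∈ SA) (hE₁fix : ∀ y ∈ SA, E₁ y = y)
    (hE₁bim : ∀ y z, y ∈ SA → z ∈ SA → ∀ x, E₁ (y * x * z) = y * E₁ x * z)
    (hE₁J : ∀ x ∈ SA, ∀ y ∈ SA, E₁ (x * J * y) = ((d : ℂ)⁻¹) • (x * y))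
    -- {U_k} is a unitary orthonormal basis for (ℬ ⊆ 𝒜, E)
    (U : Fin d → A₁) (hUmem : ∀ t, U t ∈ SA)
    (hUu : ∀ t, U t ∈ unitary A₁)
    (hUorth : ∀ t t', E (star (U t) * U t') = if t = t' then 1 else 0)
    (hUbasis : ∀ x ∈ SA, x = ∑ t, U t * E (star (U t) * x)) :
    ∀ W : Fin d → A₁,
      (∀ j, W j = ∑ t : Fin d, Complex.exp (2 * Real.pi * Complex.I *
          ((j : ℕ) * (t : ℕ) / (d : ℂ))) • (U t * J * star (U t))) →
      (∑ t, U t * J * star (U t) = 1) ∧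
      (∀ j, W j ∈ unitary A₁) ∧
      (∀ j j', E₁ (star (W j) * W j') = if j = j' then 1 else 0) ∧
      (∀ x : A₁, x = ∑ j, W j * E₁ (star (W j) * x)) :=
  basic_construction_unitary_onb_general SA SB hBA d hd E E₁ hEmem hEfix J hJstar hJE hspan hE₁J U
    hUmem hUu hUorth hUbasis
end
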